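/- arXiv:1802.08736 — 3 statements merged into one kernel-verified Lean document; each statement's English description precedes it below -/
import Mathlib

section
/- Let (U,V) be a pair of discrete random variables with marginals π and joint p(u,v), and let X = f(U), Y = g(V) with f, g ≥ 0. Then |Cov(X,Y)| ≤ 2γ · (max_v g(v)) · (sum_u f(u)), where γ = (1/2) max_u sum_v |p(u,v) − π(u)π(v)|. -/
open Finset

/-- Covariance bound via the mixing coefficient: if `(U,V)` has joint pmf `p` with common
marginal `π`, and `X = f(U)`, `Y = g(V)` with `f, g ≥ 0`, then
`|Cov(X,Y)| ≤ 2γ · (max_v g(v)) · (∑_u f(u))` where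
`γ = (1/2) max_u ∑_v |p(u,v) − π(u)π(v)|`. -/
theorem stmt_10 {S : Type*} [Fintype S] [Nonempty S]
    (p : S × S → ℝ) (hp : ∀ uv, 0 ≤ p uv) (hsum : ∑ uv, p uv = 1)
    (π : S → ℝ)
    (hmarg1 : ∀ u, ∑ v, p (u, v) = π u)
    (hmarg2 : ∀ v, ∑ u, p (u, v) = π v)
    (f g : S → ℝ) (hf : ∀ u, 0 ≤ f u) (hg : ∀ v, 0 ≤ g v) :
    |(∑ u, ∑ v, p (u, v) * (f u * g v))
        - (∑ u, π u * f u) * (∑ v, π v * g v)|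
      ≤ 2 * ((1 / 2) * (univ.sup' univ_nonempty
              (fun u => ∑ v, |p (u, v) - π u * π v|)))
        * (univ.sup' univ_nonempty g) * (∑ u, f u) := by
  set γ : ℝ := univ.sup' univ_nonempty (fun u => ∑ v, |p (u, v) - π u * π v|) with hγdef
  set G : ℝ := univ.sup' univ_nonempty g with hGdef
  have hG : ∀ v, g v ≤ G := fun v => le_sup' _ (mem_univ v)
  have hG0 : 0 ≤ G := (hg (Classical.arbitrary S)).trans (hG _)
  have hγle : ∀ u, ∑ v, |p (u, v) - π u * π v| ≤ γ := fun u =>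
    le_sup' (fun u => ∑ v, |p (u, v) - π u * π v|) (mem_univ u)
  have hγ0 : 0 ≤ γ :=
    le_trans (Finset.sum_nonneg fun v _ => abs_nonneg _) (hγle (Classical.arbitrary S))
  have key : (∑ u, ∑ v, p (u, v) * (f u * g v))
      - (∑ u, π u * f u) * (∑ v, π v * g v)
      = ∑ u, ∑ v, (p (u, v) - π u * π v) * (f u * g v) := by
    rw [Finset.sum_mul_sum, ← Finset.sum_sub_distrib]
    refine Finset.sum_congr rfl fun u _ => ?_
    rw [← Finset.sum_sub_distrib]
    exact Finset.sum_congr rfl fun v _ => by ring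
  rw [key]
  have step : ∀ u, |∑ v, (p (u, v) - π u * π v) * (f u * g v)| ≤ γ * G * f u := by
    intro u
    calc |∑ v, (p (u, v) - π u * π v) * (f u * g v)|
        ≤ ∑ v, |(p (u, v) - π u * π v) * (f u * g v)| := Finset.abs_sum_le_sum_abs _ _
      _ ≤ ∑ v, |p (u, v) - π u * π v| * (G * f u) := by
          refine Finset.sum_le_sum fun v _ => ?_
          rw [abs_mul]
          refine mul_le_mul_of_nonneg_left ?_ (abs_nonneg _)
          rw [abs_of_nonneg (mul_nonneg (hf u) (hg v))]
          calc f u * g v ≤ f u * G := mul_le_mul_of_nonneg_left (hG v) (hf u)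
            _ = G * f u := by ring
      _ = (∑ v, |p (u, v) - π u * π v|) * (G * f u) := by rw [← Finset.sum_mul]
      _ ≤ γ * (G * f u) :=
          mul_le_mul_of_nonneg_right (hγle u) (mul_nonneg hG0 (hf u))
      _ = γ * G * f u := by ring
  calc |∑ u, ∑ v, (p (u, v) - π u * π v) * (f u * g v)|
      ≤ ∑ u, |∑ v, (p (u, v) - π u * π v) * (f u * g v)| := Finset.abs_sum_le_sum_abs _ _
    _ ≤ ∑ u, γ * G * f u := Finset.sum_le_sum fun u _ => step u
    _ = γ * G * ∑ u, f u := by rw [← Finset.mul_sum]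
    _ = 2 * ((1 / 2) * γ) * G * (∑ u, f u) := by ring
end

section
/- For any ordered sequence A = [v_1,...,v_k] arising from lifting with π_1 being the stationary distribution of the random walk (π_1(v) = deg(v)/(2|E|)), the lifting probability satisfies π̃(A) ≥ 1/(2|E| · D), where D = product over r=1..k−1 of (Δ_1 + ... + Δ_r) and Δ_1 ≥ ... ≥ Δ_k are the k largest vertex degrees in G. -/
open Finset

variable {V : Type*} [Fintype V] [DecidableEq V]

/-- The number of boundary edges of `S`: edges of `G` joining a vertex of `S` to a vertex
outside of `S`. -/
def boundaryEdgeCount (G : SimpleGraph V) [DecidableRel G.Adj] (S : Finset V) : ℕ :=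
  ∑ u ∈ S, (Finset.univ.filter (fun w => w ∉ S ∧ G.Adj u w)).card

/-- The prefix vertex set `{vs 0, …, vs (r-1)}` of an ordered sequence of vertices. -/
def liftPrefix (vs : ℕ → V) (r : ℕ) : Finset V :=
  (Finset.range r).image vs

/-- `Δ₁ + ⋯ + Δᵣ`: the largest possible sum of the degrees of `r` distinct vertices,
i.e. the sum of the `r` largest vertex degrees of `G`. -/
def topDegSum (G : SimpleGraph V) [DecidableRel G.Adj] (r : ℕ) : ℕ :=
  (Finset.univ.powersetCard r).sup (fun s => ∑ v ∈ s, G.degree v)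

lemma deg_pos (G : SimpleGraph V) [DecidableRel G.Adj] (hG : G.Connected)
    [Nontrivial V] (v : V) : 0 < G.degree v := by
  rw [SimpleGraph.degree_pos_iff_exists_adj]
  obtain ⟨w, hw⟩ := exists_ne v
  obtain ⟨p⟩ := hG.preconnected v w
  cases p with
  | nil => exact absurd rfl hw
  | cons h q => exact ⟨_, h⟩

lemma edge_pos (G : SimpleGraph V) [DecidableRel G.Adj] (hG : G.Connected)
    [Nontrivial V] : 0 < G.edgeFinset.card := by
  obtain ⟨v⟩ := (inferInstance : Nonempty V)
  have h := deg_pos G hG v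
  rw [SimpleGraph.degree_pos_iff_exists_adj] at h
  obtain ⟨w, hw⟩ := h
  exact Finset.card_pos.mpr ⟨s(v, w), by simp [SimpleGraph.mem_edgeFinset, hw]⟩

/-- For any ordered sequence `A = [vs 0, …, vs (k-1)]` arising from lifting (so each new
vertex is adjacent to the current prefix), with the starting distribution
`π₁(v) = deg(v)/(2|E|)` of the stationary random walk, the lifting probability satisfies
`π̃(A) ≥ 1/(2|E|·D)` where `D = ∏_{r=1}^{k-1} (Δ₁ + ⋯ + Δᵣ)`. -/
theorem stmt_18 (G : SimpleGraph V) [DecidableRel G.Adj] (hG : G.Connected)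
    [Nontrivial V] (k : ℕ) (hk : 1 ≤ k) (vs : ℕ → V)
    (hinj : ∀ i j, i < k → j < k → vs i = vs j → i = j)
    (hadj : ∀ r, 1 ≤ r → r < k → ∃ w ∈ liftPrefix vs r, G.Adj w (vs r)) :
    ((G.degree (vs 0) : ℝ) / (2 * G.edgeFinset.card)) * ∏ r ∈ Finset.Ico 1 k,
        (((liftPrefix vs r).filter (fun w => G.Adj w (vs r))).card : ℝ)
          / (boundaryEdgeCount G (liftPrefix vs r) : ℝ)
      ≥ 1 / ((2 * G.edgeFinset.card : ℝ)
          * ∏ r ∈ Finset.Icc 1 (k - 1), (topDegSum G r : ℝ)) := by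
  have hE : (0 : ℝ) < 2 * G.edgeFinset.card := by
    have := edge_pos G hG; positivity
  -- rewrite Icc 1 (k-1) as Ico 1 k
  have hIcc : Finset.Icc 1 (k - 1) = Finset.Ico 1 k := by
    rw [← Finset.Ico_add_one_right_eq_Icc]
    congr 1
    omega
  rw [hIcc]
  -- per-factor bounds
  have key : ∀ r ∈ Finset.Ico 1 k,
      (1 : ℝ) / (topDegSum G r : ℝ) ≤
      (((liftPrefix vs r).filter (fun w => G.Adj w (vs r))).card : ℝ)
        / (boundaryEdgeCount G (liftPrefix vs r) : ℝ) := by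
    intro r hr
    rw [Finset.mem_Ico] at hr
    obtain ⟨hr1, hrk⟩ := hr
    -- prefix has card r and lies in powersetCard r
    have hcard : (liftPrefix vs r).card = r := by
      rw [liftPrefix, Finset.card_image_of_injOn, Finset.card_range]
      intro i hi j hj hij
      simp only [Finset.coe_range, Set.mem_Iio] at hi hj
      exact hinj i j (hi.trans hrk) (hj.trans hrk) hij
    -- vs r ∉ prefix
    have hnm : vs r ∉ liftPrefix vs r := by
      simp only [liftPrefix, Finset.mem_image, Finset.mem_range]
      rintro ⟨i, hi, hvi⟩
      exact absurd (hinj i r (hi.trans hrk) hrk hvi) (Nat.ne_of_lt hi)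
    obtain ⟨w, hwS, hwadj⟩ := hadj r hr1 hrk
    -- filter card ≥ 1
    have hc1 : 1 ≤ ((liftPrefix vs r).filter (fun w => G.Adj w (vs r))).card :=
      Finset.card_pos.mpr ⟨w, Finset.mem_filter.mpr ⟨hwS, hwadj⟩⟩
    -- boundary ≥ 1
    have hb1 : 1 ≤ boundaryEdgeCount G (liftPrefix vs r) := by
      rw [boundaryEdgeCount]
      calc 1 ≤ (Finset.univ.filter (fun x => x ∉ liftPrefix vs r ∧ G.Adj w x)).card :=
            Finset.card_pos.mpr ⟨vs r, by simp [hnm, hwadj]⟩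
        _ ≤ _ := Finset.single_le_sum (f := fun u => (Finset.univ.filter (fun x => x ∉ liftPrefix vs r ∧ G.Adj u x)).card) (fun _ _ => Nat.zero_le _) hwS
    -- boundary ≤ topDegSum r
    have hbt : boundaryEdgeCount G (liftPrefix vs r) ≤ topDegSum G r := by
      have h1 : boundaryEdgeCount G (liftPrefix vs r) ≤ ∑ u ∈ liftPrefix vs r, G.degree u := by
        apply Finset.sum_le_sum
        intro u hu
        rw [← SimpleGraph.card_neighborFinset_eq_degree]
        apply Finset.card_le_card
        intro x hx
        simp only [Finset.mem_filter] at hx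
        simp [SimpleGraph.mem_neighborFinset, hx.2.2]
      refine h1.trans (Finset.le_sup (f := fun s => ∑ v ∈ s, G.degree v) ?_)
      rw [Finset.mem_powersetCard]
      exact ⟨Finset.subset_univ _, hcard⟩
    have hb1' : (1 : ℝ) ≤ (boundaryEdgeCount G (liftPrefix vs r) : ℝ) := by exact_mod_cast hb1
    apply div_le_div₀ (by exact_mod_cast Nat.zero_le _ |>.trans hc1)
      (by exact_mod_cast hc1) (by linarith) (by exact_mod_cast hbt)
  have hprod : ∏ r ∈ Finset.Ico 1 k, (1 : ℝ) / (topDegSum G r : ℝ) ≤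
      ∏ r ∈ Finset.Ico 1 k,
        (((liftPrefix vs r).filter (fun w => G.Adj w (vs r))).card : ℝ)
          / (boundaryEdgeCount G (liftPrefix vs r) : ℝ) := by
    apply Finset.prod_le_prod (fun r _ => by positivity) key
  have hdeg : (1 : ℝ) ≤ (G.degree (vs 0) : ℝ) := by
    exact_mod_cast deg_pos G hG (vs 0)
  calc 1 / ((2 * G.edgeFinset.card : ℝ) * ∏ r ∈ Finset.Ico 1 k, (topDegSum G r : ℝ))
      = (1 / (2 * G.edgeFinset.card : ℝ)) * ∏ r ∈ Finset.Ico 1 k, (1 : ℝ) / (topDegSum G r : ℝ) := by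
        rw [one_div, one_div, mul_inv, ← Finset.prod_inv_distrib]
        simp [one_div]
    _ ≤ ((G.degree (vs 0) : ℝ) / (2 * G.edgeFinset.card)) * ∏ r ∈ Finset.Ico 1 k,
        (((liftPrefix vs r).filter (fun w => G.Adj w (vs r))).card : ℝ)
          / (boundaryEdgeCount G (liftPrefix vs r) : ℝ) := by
        apply mul_le_mul
        · gcongr
        · exact hprod
        · exact Finset.prod_nonneg (fun r _ => by positivity)
        · positivity
end

section
/- Under the Horvitz–Thompson setup with π the unordered lifting distribution started from the random-walk stationary distribution, the independent-sample variance satisfies V ≤ N_m · 2|E| · D, where N_m is the number of k-CISs isomorphic to H_m and D = prod_{r=2}^{k−1}(Δ_1+...+Δ_r). -/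
/-!
Since `φ` takes only the values `0` and `1 / π_U(T)`, `Var φ ≤ E[φ²] = ∑_{T ≅ H_m} 1 / π_U(T)`,
so it suffices to show `π_U(T) ≥ 1 / (2|E| · D)` for every connected induced `k`-subgraph `T`.
Remove from `T` a vertex `v` that keeps `T \ {v}` connected and has a neighbour in it (a leaf of
a spanning tree): the lifting step adding `v` to `T \ {v}` has probability at least
`1 / |∂(T \ {v})| ≥ 1 / (Δ₁ + ⋯ + Δ_{k-1})`, and induct on `k`. The first step, from a single
vertex `u`, is exact: `π₁(u) / deg u = 1 / (2|E|)`, which is why `D` starts at `r = 2`.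
-/

open Finset

attribute [local instance] Classical.propDecidable

variable {V : Type*} [Fintype V] [DecidableEq V]

/-- `liftProb G π₁ k T` is the probability that the lifting procedure started from
`v₁ ~ π₁`, which at each step adds the outside endpoint of an edge chosen uniformly from
the boundary of the current subgraph, produces the vertex set `T` after `k - 1` steps. -/
noncomputable def liftProb (G : SimpleGraph V) [DecidableRel G.Adj] (π₁ : V → ℝ) :
    ℕ → Finset V → ℝ
  | 0, _ => 0
  | 1, T => ∑ v ∈ T, if T = {v} then π₁ v else 0
  | (n + 2), T => ∑ v ∈ T,
      if (G.induce ((T.erase v : Finset V) : Set V)).Connected then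
        liftProb G π₁ (n + 1) (T.erase v)
          * ((((T.erase v).filter (fun w => G.Adj w v)).card : ℝ)
            / (boundaryEdgeCount G (T.erase v) : ℝ))
      else 0

theorem sum_mul_sq_div_sub_sq_le_card_filter_mul {ι : Type*} (A : Finset ι) (p : ι → Prop)
    [DecidablePred p] (f : ι → ℝ) (B : ℝ) (hf : ∀ i ∈ A, 0 ≤ f i)
    (hB : ∀ i ∈ A, p i → 1 ≤ f i * B) :
    (∑ i ∈ A, f i * ((if p i then (1 : ℝ) else 0) / f i) ^ 2)
      - (∑ i ∈ A, f i * ((if p i then (1 : ℝ) else 0) / f i)) ^ 2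
      ≤ #(A.filter p) * B := by
  have hinv : ∀ x : ℝ, x * (1 / x) ^ 2 = x⁻¹ := fun x => by
    obtain rfl | hx := eq_or_ne x 0
    · simp
    · field_simp
  calc _ ≤ ∑ i ∈ A, f i * ((if p i then (1 : ℝ) else 0) / f i) ^ 2 := sub_le_self _ (sq_nonneg _)
    _ = ∑ i ∈ A.filter p, (f i)⁻¹ := by
      rw [sum_filter]
      refine sum_congr rfl fun i _ => ?_
      split_ifs
      · exact hinv (f i)
      · simp
    _ ≤ ∑ i ∈ A.filter p, B := sum_le_sum fun i hi => by
      obtain ⟨hiA, hpi⟩ := mem_filter.1 hi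
      have hpos : 0 < f i := (hf i hiA).lt_of_ne fun h => by
        simpa [← h] using (hB i hiA hpi).trans_lt' one_pos
      exact (inv_le_iff_one_le_mul₀' hpos).2 (hB i hiA hpi)
    _ = #(A.filter p) * B := by rw [sum_const, nsmul_eq_mul]

namespace SimpleGraph

variable {G : SimpleGraph V}

theorem Connected.exists_connected_induce_erase {S : Finset V}
    (hconn : (G.induce (S : Set V)).Connected) (hS : 2 ≤ #S) :
    ∃ v ∈ S, (G.induce ((S.erase v : Finset V) : Set V)).Connected ∧
      ∃ w ∈ S.erase v, G.Adj w v := by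
  have : Nontrivial (S : Set V) := Finset.one_lt_card_iff_nontrivial.mp hS |>.coe_sort
  obtain ⟨v, hv⟩ := hconn.exists_connected_induce_compl_singleton_of_finite_nontrivial
  obtain ⟨w, hw⟩ := hconn.preconnected.exists_adj_of_nontrivial v
  let f : (G.induce (S : Set V)).induce {v}ᶜ →g G.induce ((S.erase v : Finset V) : Set V) :=
    { toFun := fun x => ⟨x.1.1, mem_erase.2 ⟨fun h => x.2 (Subtype.ext h), x.1.2⟩⟩
      map_rel' := id }
  have hf : Function.Surjective f := fun y =>
    ⟨⟨⟨y.1, mem_of_mem_erase y.2⟩,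
      fun h => ne_of_mem_erase y.2 (congrArg Subtype.val h)⟩, rfl⟩
  exact ⟨v, v.2, hv.map f hf, w, mem_erase.2 ⟨fun h => hw.ne (Subtype.ext h).symm, w.2⟩,
    hw.symm⟩

end SimpleGraph

section Lifting

variable (G : SimpleGraph V) [DecidableRel G.Adj]

theorem boundaryEdgeCount_pos {S : Finset V} {w v : V} (hw : w ∈ S) (hv : v ∉ S)
    (hwv : G.Adj w v) : 0 < boundaryEdgeCount G S :=
  (card_pos.2 ⟨v, mem_filter.2 ⟨mem_univ v, hv, hwv⟩⟩).trans_le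
    (single_le_sum (f := fun u => #(univ.filter fun x => x ∉ S ∧ G.Adj u x))
      (fun _ _ => Nat.zero_le _) hw)

theorem boundaryEdgeCount_le_sum_degree (S : Finset V) :
    boundaryEdgeCount G S ≤ ∑ u ∈ S, G.degree u :=
  sum_le_sum fun u _ => card_le_card fun x hx => by
    simp_all [SimpleGraph.mem_neighborFinset]

theorem boundaryEdgeCount_le_topDegSum (S : Finset V) :
    boundaryEdgeCount G S ≤ topDegSum G #S :=
  (boundaryEdgeCount_le_sum_degree G S).trans <|
    le_sup (f := fun s => ∑ v ∈ s, G.degree v) (mem_powersetCard_univ.2 rfl)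

theorem boundaryEdgeCount_singleton (u : V) : boundaryEdgeCount G {u} = G.degree u := by
  rw [boundaryEdgeCount, sum_singleton, ← SimpleGraph.card_neighborFinset_eq_degree]
  congr 1
  ext x
  simp only [mem_filter, mem_univ, true_and, mem_singleton,
    SimpleGraph.mem_neighborFinset]
  exact ⟨And.right, fun h => ⟨h.ne', h⟩⟩

variable {G}

theorem liftProb_nonneg {π₁ : V → ℝ} (hπ : ∀ v, 0 ≤ π₁ v) :
    ∀ (n : ℕ) (S : Finset V), 0 ≤ liftProb G π₁ n S
  | 0, _ => by simp [liftProb]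
  | 1, S => sum_nonneg fun v _ => by split_ifs <;> simp [hπ]
  | n + 2, S => sum_nonneg fun v _ => by
    split_ifs
    · exact mul_nonneg (liftProb_nonneg hπ (n + 1) _) (by positivity)
    · exact le_rfl

theorem liftProb_one_singleton (π₁ : V → ℝ) (u : V) : liftProb G π₁ 1 {u} = π₁ u := by
  simp [liftProb]

theorem liftProb_le_liftProb_add_two_mul {π₁ : V → ℝ} (hπ : ∀ v, 0 ≤ π₁ v) (n : ℕ)
    {S : Finset V} {v : V} (hv : v ∈ S)
    (hconn : (G.induce ((S.erase v : Finset V) : Set V)).Connected)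
    (hadj : ∃ w ∈ S.erase v, G.Adj w v) :
    liftProb G π₁ (n + 1) (S.erase v)
      ≤ liftProb G π₁ (n + 2) S * boundaryEdgeCount G (S.erase v) := by
  obtain ⟨w, hw, hwv⟩ := hadj
  have hb : (0 : ℝ) < boundaryEdgeCount G (S.erase v) := by
    exact_mod_cast boundaryEdgeCount_pos G hw (notMem_erase v S) hwv
  have hc : (1 : ℝ) ≤ #((S.erase v).filter fun x => G.Adj x v) := by
    exact_mod_cast card_pos.2 ⟨w, mem_filter.2 ⟨hw, hwv⟩⟩
  have hterm : liftProb G π₁ (n + 1) (S.erase v)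
      ≤ liftProb G π₁ (n + 1) (S.erase v) * #((S.erase v).filter fun x => G.Adj x v) :=
    le_mul_of_one_le_right (liftProb_nonneg hπ _ _) hc
  rw [← div_le_iff₀ hb, liftProb]
  refine le_trans ?_ (single_le_sum (fun u _ => ?_) hv)
  · rw [if_pos hconn, mul_div_assoc']
    exact div_le_div_of_nonneg_right hterm hb.le
  · split_ifs
    · exact mul_nonneg (liftProb_nonneg hπ _ _) (by positivity)
    · exact le_rfl

variable (G) in
noncomputable def degreeDist : V → ℝ := fun v => (G.degree v : ℝ) / (2 * #G.edgeFinset)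

omit [DecidableEq V] in
variable (G) in
theorem degreeDist_nonneg (v : V) : 0 ≤ degreeDist G v := by
  unfold degreeDist
  positivity

omit [DecidableEq V] in
theorem card_edgeFinset_pos_of_adj {u v : V} (h : G.Adj u v) : (0 : ℝ) < 2 * #G.edgeFinset := by
  have : 0 < #G.edgeFinset := card_pos.2 ⟨s(u, v), G.mem_edgeFinset.2 h⟩
  positivity

theorem one_le_liftProb_one_mul {u : V} (hu : 0 < G.degree u) :
    1 ≤ liftProb G (degreeDist G) 1 {u} * (2 * #G.edgeFinset) := by
  obtain ⟨w, hw⟩ := G.degree_pos_iff_exists_adj u |>.1 hu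
  rw [liftProb_one_singleton, degreeDist, div_mul_cancel₀ _ (card_edgeFinset_pos_of_adj hw).ne']
  exact_mod_cast hu

theorem one_le_liftProb_two_mul {S : Finset V} (hS : #S = 2)
    (hconn : (G.induce (S : Set V)).Connected) :
    1 ≤ liftProb G (degreeDist G) 2 S * (2 * #G.edgeFinset) := by
  obtain ⟨v, hv, hconn', w, hw, hwv⟩ := hconn.exists_connected_induce_erase hS.ge
  obtain ⟨u, hu⟩ := card_eq_one.1 (by rw [card_erase_of_mem hv, hS] :
    #(S.erase v) = 1)
  have hstep := liftProb_le_liftProb_add_two_mul (degreeDist_nonneg G) 0 hv hconn' ⟨w, hw, hwv⟩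
  rw [hu, liftProb_one_singleton, boundaryEdgeCount_singleton, degreeDist] at hstep
  rw [hu, mem_singleton] at hw
  subst hw
  have hE := card_edgeFinset_pos_of_adj hwv
  have hdeg : (0 : ℝ) < G.degree w := by exact_mod_cast hwv.degree_pos_left
  rw [div_le_iff₀ hE] at hstep
  exact le_of_mul_le_mul_left (by linarith) hdeg

theorem one_le_liftProb_mul_prod_topDegSum_of_two_le {n : ℕ} (hn : 2 ≤ n) {S : Finset V}
    (hS : #S = n) (hconn : (G.induce (S : Set V)).Connected) :
    1 ≤ liftProb G (degreeDist G) n S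
      * (2 * #G.edgeFinset * ∏ r ∈ Icc 2 (n - 1), (topDegSum G r : ℝ)) := by
  induction n, hn using Nat.le_induction generalizing S with
  | base => simpa using one_le_liftProb_two_mul hS hconn
  | succ n hn ih =>
    obtain ⟨v, hv, hconn', hadj⟩ := hconn.exists_connected_induce_erase (by omega)
    have hcard : #(S.erase v) = n := by rw [card_erase_of_mem hv, hS]; rfl
    obtain ⟨m, rfl⟩ : ∃ m, n = m + 1 := ⟨n - 1, by omega⟩
    have hstep := liftProb_le_liftProb_add_two_mul (degreeDist_nonneg G) m hv hconn' hadj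
    have hb : (boundaryEdgeCount G (S.erase v) : ℝ) ≤ topDegSum G (m + 1) := by
      exact_mod_cast hcard ▸ boundaryEdgeCount_le_topDegSum G (S.erase v)
    have hL := liftProb_nonneg (G := G) (degreeDist_nonneg G) (m + 2) S
    rw [Nat.add_sub_cancel, prod_Icc_succ_top (by omega)]
    calc (1 : ℝ)
        ≤ liftProb G (degreeDist G) (m + 1) (S.erase v)
            * (2 * #G.edgeFinset * ∏ r ∈ Icc 2 m, (topDegSum G r : ℝ)) := ih hcard hconn'
      _ ≤ liftProb G (degreeDist G) (m + 2) S * topDegSum G (m + 1)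
            * (2 * #G.edgeFinset * ∏ r ∈ Icc 2 m, (topDegSum G r : ℝ)) := by
        gcongr
        exact hstep.trans (by gcongr)
      _ = _ := by ring

theorem one_le_liftProb_mul_prod_topDegSum (hdeg : ∀ v, 0 < G.degree v) {n : ℕ} (hn : 1 ≤ n)
    {S : Finset V} (hS : #S = n) (hconn : (G.induce (S : Set V)).Connected) :
    1 ≤ liftProb G (degreeDist G) n S
      * (2 * #G.edgeFinset * ∏ r ∈ Icc 2 (n - 1), (topDegSum G r : ℝ)) := by
  obtain rfl | hn := hn.eq_or_lt
  · obtain ⟨u, rfl⟩ := card_eq_one.1 hS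
    simpa using one_le_liftProb_one_mul (hdeg u)
  · exact one_le_liftProb_mul_prod_topDegSum_of_two_le hn hS hconn

end Lifting

/-- Variance bound for the unordered lift estimator started from the random-walk stationary
distribution `π₁(v) = deg(v)/(2|E|)`: with `φ(T) = 1(T ≅ H_m)/π_U(T)` and `T ~ π_U` over
the connected induced `k`-subgraphs, `Var(φ) ≤ N_m · 2|E| · D` where
`N_m` is the number of `k`-CISs isomorphic to `H_m` and `D = ∏_{r=2}^{k-1}(Δ₁+⋯+Δᵣ)`. -/
theorem stmt_19 (G : SimpleGraph V) [DecidableRel G.Adj] (hG : G.Connected)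
    [Nontrivial V] (k : ℕ) (hk : 1 ≤ k) (Hm : SimpleGraph (Fin k)) :
    (∑ T ∈ Finset.univ.filter
          (fun T : Finset V => T.card = k ∧ (G.induce (T : Set V)).Connected),
        liftProb G (fun v => (G.degree v : ℝ) / (2 * G.edgeFinset.card)) k T
          * ((if Nonempty ((G.induce (T : Set V)) ≃g Hm) then (1 : ℝ) else 0)
              / liftProb G (fun v => (G.degree v : ℝ) / (2 * G.edgeFinset.card)) k T) ^ 2)
      - (∑ T ∈ Finset.univ.filter
            (fun T : Finset V => T.card = k ∧ (G.induce (T : Set V)).Connected),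
          liftProb G (fun v => (G.degree v : ℝ) / (2 * G.edgeFinset.card)) k T
            * ((if Nonempty ((G.induce (T : Set V)) ≃g Hm) then (1 : ℝ) else 0)
                / liftProb G (fun v => (G.degree v : ℝ) / (2 * G.edgeFinset.card)) k T)) ^ 2
      ≤ ((Finset.univ.filter
            (fun T : Finset V => T.card = k ∧ (G.induce (T : Set V)).Connected
              ∧ Nonempty ((G.induce (T : Set V)) ≃g Hm))).card : ℝ)
          * (2 * G.edgeFinset.card)
          * ∏ r ∈ Finset.Icc 2 (k - 1), (topDegSum G r : ℝ) := by
  have hdeg : ∀ v, 0 < G.degree v := fun v => hG.preconnected.degree_pos_of_nontrivial v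
  refine (sum_mul_sq_div_sub_sq_le_card_filter_mul _ _ (liftProb G (degreeDist G) k)
    (2 * #G.edgeFinset * ∏ r ∈ Icc 2 (k - 1), (topDegSum G r : ℝ))
    (fun T _ => liftProb_nonneg (degreeDist_nonneg G) k T) fun T hT _ => ?_).trans_eq ?_
  · obtain ⟨hcard, hconn⟩ := (mem_filter.1 hT).2
    exact one_le_liftProb_mul_prod_topDegSum hdeg hk hcard hconn
  · simp only [filter_filter, and_assoc, mul_assoc]
end
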